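/- Let n ≥ 1 be an integer and p a prime. Then for all C, D ∈ M_n(𝔽_p): |G_p(C, D)| ≤ p^{(n² + d(C))/2}. -/

import Mathlib

/-- The matrix Gauss sum `G_p(C,D) = ∑_{Z ∈ M_n(𝔽_p)} e^{2πi·tr(CZ² + DZ)/p}`
(set to `0` in the degenerate case `p = 0`). -/
noncomputable def Gauss (n p : ℕ) (C D : Matrix (Fin n) (Fin n) (ZMod p)) : ℂ :=
  if h : p = 0 then 0
  else
    letI : NeZero p := ⟨h⟩
    ∑ Z : Matrix (Fin n) (Fin n) (ZMod p),
      Complex.exp (2 * (Real.pi : ℂ) * Complex.I *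
        (((Matrix.trace (C * Z * Z + D * Z)).val : ℂ) / (p : ℂ)))

/-- `d(C)`: the dimension over `𝔽_p` of `{Z ∈ M_n(𝔽_p) : CZ + ZC = 0}`. -/
noncomputable def dC (n p : ℕ) (C : Matrix (Fin n) (Fin n) (ZMod p)) : ℕ :=
  Module.finrank (ZMod p)
    ↥(LinearMap.ker (LinearMap.mulLeft (ZMod p) C + LinearMap.mulRight (ZMod p) C))

/-! Weyl differencing: substituting `Z = W + Y` in `conj G · G` turns the quadratic phase
`tr(CZ² + DZ)` into `tr(CY² + DY) + tr((CY + YC)W)`, which is linear in `W`. Summing over `W`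
kills every `Y` with `CY + YC ≠ 0`, because the trace pairing is nondegenerate and the standard
character of `𝔽_p` is primitive, so `|G|² ≤ p^{n²} · #{Y : CY + YC = 0} = p^{n² + d(C)}`. -/

open Finset

section Differencing

variable {G A R : Type*} [AddCommGroup G] [Fintype G] [AddCommGroup A]

theorem AddChar.sum_map_neg_mul_sum_eq [CommRing R] (ψ : AddChar A R) (q : G → A)
    (L : G → G →+ A) (hq : ∀ W Y, q (W + Y) = q W + q Y + L Y W) :
    (∑ W, ψ (-q W)) * ∑ Z, ψ (q Z) = ∑ Y, ψ (q Y) * ∑ W, ψ.compAddMonoidHom (L Y) W := by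
  calc (∑ W, ψ (-q W)) * ∑ Z, ψ (q Z)
      = ∑ W, ∑ Y, ψ (-q W) * ψ (q (W + Y)) := by
        rw [sum_mul_sum]
        exact sum_congr rfl fun W _ => (Fintype.sum_equiv (Equiv.addLeft W) _ _ fun _ => rfl).symm
    _ = ∑ W, ∑ Y, ψ (q Y) * ψ (L Y W) := by
        refine sum_congr rfl fun W _ => sum_congr rfl fun Y _ => ?_
        rw [← AddChar.map_add_eq_mul, ← AddChar.map_add_eq_mul, hq]
        congr 1
        abel
    _ = ∑ Y, ψ (q Y) * ∑ W, ψ.compAddMonoidHom (L Y) W := by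
        rw [sum_comm]
        simp only [mul_sum, AddChar.compAddMonoidHom_apply]

theorem AddChar.norm_sum_sq_le_of_map_add [Finite A] (ψ : AddChar A ℂ) (q : G → A)
    (L : G → G →+ A) (hq : ∀ W Y, q (W + Y) = q W + q Y + L Y W) :
    ‖∑ Z, ψ (q Z)‖ ^ 2 ≤ Nat.card G * Nat.card {Y // ψ.compAddMonoidHom (L Y) = 0} := by
  classical
  calc ‖∑ Z, ψ (q Z)‖ ^ 2 = ‖(∑ W, ψ (-q W)) * ∑ Z, ψ (q Z)‖ := by
        simp only [AddChar.map_neg_eq_conj, ← map_sum, norm_mul, Complex.norm_conj, sq]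
    _ ≤ ∑ Y, ‖ψ (q Y) * ∑ W, ψ.compAddMonoidHom (L Y) W‖ := by
        rw [ψ.sum_map_neg_mul_sum_eq q L hq]
        exact norm_sum_le _ _
    _ = ∑ Y, if ψ.compAddMonoidHom (L Y) = 0 then (Nat.card G : ℝ) else 0 := by
        refine sum_congr rfl fun Y _ => ?_
        rw [AddChar.sum_eq_ite, norm_mul, AddChar.norm_apply, one_mul, apply_ite norm,
          norm_zero, Complex.norm_natCast, Nat.card_eq_fintype_card]
    _ = Nat.card G * Nat.card {Y // ψ.compAddMonoidHom (L Y) = 0} := by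
        rw [sum_ite, sum_const_zero, add_zero, sum_const, nsmul_eq_mul, mul_comm,
          Nat.card_eq_fintype_card (α := Subtype _), Fintype.card_subtype]

end Differencing

theorem AddChar.IsPrimitive.compAddMonoidHom_traceMulLeft_eq_zero_iff {R R' n : Type*}
    [CommRing R] [CommMonoid R'] [Fintype n] {ψ : AddChar R R'} (hψ : ψ.IsPrimitive)
    {M : Matrix n n R} :
    ψ.compAddMonoidHom ((Matrix.traceAddMonoidHom n R).comp (AddMonoidHom.mulLeft M)) = 0 ↔
      M = 0 := by
  classical
  refine ⟨fun h => ?_, fun h => by ext; simp [h]⟩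
  by_contra hM
  obtain ⟨i, j, hij⟩ : ∃ i j, M i j ≠ 0 := by
    by_contra! h0
    exact hM (Matrix.ext h0)
  obtain ⟨x, hx⟩ := AddChar.ne_one_iff.1 (hψ hij)
  apply hx
  simpa [Matrix.trace_mul_single] using DFunLike.congr_fun h (Matrix.single j i x)

theorem Matrix.trace_mul_mul_add_mul_add {R n : Type*} [CommRing R] [Fintype n]
    (C D W Y : Matrix n n R) :
    trace (C * (W + Y) * (W + Y) + D * (W + Y)) =
      trace (C * W * W + D * W) + trace (C * Y * Y + D * Y) + trace ((C * Y + Y * C) * W) := by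
  simp only [Matrix.mul_add, Matrix.add_mul, Matrix.trace_add]
  rw [Matrix.trace_mul_cycle C W Y]
  ring

theorem Real.le_rpow_div_two_of_sq_le {x b : ℝ} {k : ℕ} (hx : 0 ≤ x) (hb : 0 ≤ b)
    (h : x ^ 2 ≤ b ^ k) : x ≤ b ^ ((k : ℝ) / 2) := by
  rw [div_eq_mul_one_div, Real.rpow_mul hb, Real.rpow_natCast, ← Real.sqrt_eq_rpow]
  exact (Real.le_sqrt hx (by positivity)).2 h


theorem Gauss_eq_sum_stdAddChar (n p : ℕ) [NeZero p] (C D : Matrix (Fin n) (Fin n) (ZMod p)) :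
    Gauss n p C D = ∑ Z, ZMod.stdAddChar (Matrix.trace (C * Z * Z + D * Z)) := by
  simp only [Gauss, dif_neg (NeZero.ne p), ZMod.stdAddChar_apply, ZMod.toCircle_apply,
    mul_div_assoc]

theorem natCard_anticommutant_eq_pow_dC (n p : ℕ) [Fact p.Prime]
    (C : Matrix (Fin n) (Fin n) (ZMod p)) :
    Nat.card {Y // C * Y + Y * C = 0} = p ^ dC n p C := by
  calc Nat.card {Y // C * Y + Y * C = 0}
      = Nat.card (LinearMap.ker (LinearMap.mulLeft (ZMod p) C + LinearMap.mulRight (ZMod p) C)) :=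
        Nat.card_congr (Equiv.subtypeEquivRight fun Y => by simp [LinearMap.mem_ker])
    _ = p ^ dC n p C := by rw [Module.natCard_eq_pow_finrank (K := ZMod p), Nat.card_zmod, dC]

theorem gauss_sum_bound_general (n p : ℕ) (hp : p.Prime)
    (C D : Matrix (Fin n) (Fin n) (ZMod p)) :
    ‖Gauss n p C D‖ ≤ (p : ℝ) ^ (((n ^ 2 + dC n p C : ℕ) : ℝ) / 2) := by
  have : Fact p.Prime := ⟨hp⟩
  set L : Matrix (Fin n) (Fin n) (ZMod p) → Matrix (Fin n) (Fin n) (ZMod p) →+ ZMod p :=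
    fun Y => (Matrix.traceAddMonoidHom _ _).comp (AddMonoidHom.mulLeft (C * Y + Y * C))
  have hL : ∀ Y, ZMod.stdAddChar.compAddMonoidHom (L Y) = 0 ↔ C * Y + Y * C = 0 := fun Y =>
    (ZMod.isPrimitive_stdAddChar p).compAddMonoidHom_traceMulLeft_eq_zero_iff
  have hcard : Nat.card (Matrix (Fin n) (Fin n) (ZMod p)) = p ^ (n ^ 2) := by
    rw [Module.natCard_eq_pow_finrank (K := ZMod p), Module.finrank_matrix, Nat.card_zmod]
    simp [sq]
  have hsq := ZMod.stdAddChar.norm_sum_sq_le_of_map_add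
    (fun Z => Matrix.trace (C * Z * Z + D * Z)) L (Matrix.trace_mul_mul_add_mul_add C D)
  rw [Nat.card_congr (Equiv.subtypeEquivRight hL), natCard_anticommutant_eq_pow_dC, hcard] at hsq
  rw [Gauss_eq_sum_stdAddChar]
  refine Real.le_rpow_div_two_of_sq_le (norm_nonneg _) p.cast_nonneg (hsq.trans_eq ?_)
  push_cast
  ring

/-- For every prime `p` and `C, D ∈ M_n(𝔽_p)`: `|G_p(C,D)| ≤ p^{(n² + d(C))/2}`. -/
theorem gauss_sum_bound (n p : ℕ) (hn : 1 ≤ n) (hp : p.Prime)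
    (C D : Matrix (Fin n) (Fin n) (ZMod p)) :
    ‖Gauss n p C D‖ ≤ (p : ℝ) ^ (((n ^ 2 + dC n p C : ℕ) : ℝ) / 2) :=
  gauss_sum_bound_general n p hp C D
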